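/- arXiv:math/9605207 — 6 statements merged into one kernel-verified Lean document; each statement's English description precedes it below -/
import Mathlib

section
/- Every element u of the augmentation ideal Δ of the integral group ring ZF of a free group F of rank n can be uniquely written as u = Σ_{i=1}^n d_i(u)(x_i - 1), where d_i(u) ∈ ZF are the (left) Fox derivatives of u. -/
/-!
Existence: `u - ε(u)` is a `ZF`-combination of the elements `g - 1`, and the identities
`gh - 1 = g (h - 1) + (g - 1)` and `g⁻¹ - 1 = -g⁻¹ (g - 1)` express each `g - 1` through the
`x_i - 1`; this works for any generating family of any group.

Uniqueness: the Fox derivative `∂_i` is the upper right entry of the algebra map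
`ZF → M₂(ZF)` induced by `x_j ↦ [[x_j, δ_ij], [0, 1]]`; matrices `[[g, ∂g], [0, 1]]` multiply
by the product rule `∂(gh) = ∂g + g ∂h`, and freeness of `F` makes the assignment a
homomorphism. As the upper left entry is the identity and the lower right entry kills
`x_j - 1`, we get `∂_i (Σ_j d_j (x_j - 1)) = d_i`.
-/

/-- The augmentation homomorphism `ZF → Z`. -/
noncomputable def aug (n : ℕ) :
    MonoidAlgebra ℤ (FreeGroup (Fin n)) →ₐ[ℤ] ℤ :=
  MonoidAlgebra.lift ℤ ℤ (FreeGroup (Fin n)) 1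

open MonoidAlgebra

section AugmentationIdeal

variable {k G : Type*} [CommRing k] [Group G]

theorem sub_algebraMap_lift_one_mem_span (u : k[G]) :
    u - algebraMap k k[G] (lift k k G 1 u) ∈
      Submodule.span k[G] (Set.range fun g : G => of k G g - 1) := by
  induction u using MonoidAlgebra.induction_on with
  | of g =>
    rw [lift_of, MonoidHom.one_apply, map_one]
    exact Submodule.subset_span ⟨g, rfl⟩
  | add x y hx hy => simpa [add_sub_add_comm] using add_mem hx hy
  | smul r x hx =>
    simpa [Algebra.smul_def, mul_sub] using Submodule.smul_of_tower_mem _ r hx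

theorem of_sub_one_mem_span_of_mem_closure {ι : Type*} {s : ι → G} {g : G}
    (hg : g ∈ Subgroup.closure (Set.range s)) :
    of k G g - 1 ∈ Submodule.span k[G] (Set.range fun i => of k G (s i) - 1) := by
  induction hg using Subgroup.closure_induction with
  | mem _ hx =>
    obtain ⟨i, rfl⟩ := hx
    exact Submodule.subset_span ⟨i, rfl⟩
  | one => rw [map_one, sub_self]; exact zero_mem _
  | mul x y _ _ hx hy =>
    have : of k G (x * y) - 1 = of k G x • (of k G y - 1) + (of k G x - 1) := by
      rw [smul_eq_mul, mul_sub, ← map_mul, mul_one]; abel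
    rw [this]
    exact add_mem (Submodule.smul_mem _ _ hy) hx
  | inv x _ hx =>
    have : of k G x⁻¹ - 1 = -(of k G x⁻¹ • (of k G x - 1)) := by
      rw [smul_eq_mul, mul_sub, ← map_mul, inv_mul_cancel, map_one, mul_one, neg_sub]
    rw [this]
    exact neg_mem (Submodule.smul_mem _ _ hx)

theorem mem_span_of_sub_one_of_lift_one_eq_zero {ι : Type*} {s : ι → G}
    (hs : Subgroup.closure (Set.range s) = ⊤) {u : k[G]} (hu : lift k k G 1 u = 0) :
    u ∈ Submodule.span k[G] (Set.range fun i => of k G (s i) - 1) := by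
  have hspan := sub_algebraMap_lift_one_mem_span u
  rw [hu, map_zero, sub_zero] at hspan
  refine Submodule.span_le.mpr ?_ hspan
  rintro _ ⟨g, rfl⟩
  exact of_sub_one_mem_span_of_mem_closure (hs ▸ Subgroup.mem_top g)

end AugmentationIdeal

namespace Matrix

variable {A : Type*} [Ring A]

def upperUnitriangularUnit (a : Aˣ) (b : A) : (Matrix (Fin 2) (Fin 2) A)ˣ where
  val := !![(a : A), b; 0, 1]
  inv := !![((a⁻¹ : Aˣ) : A), -((a⁻¹ : Aˣ) : A) * b; 0, 1]
  val_inv := by simp [Matrix.one_fin_two]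
  inv_val := by simp [Matrix.one_fin_two]

@[simp]
theorem coe_upperUnitriangularUnit (a : Aˣ) (b : A) :
    (upperUnitriangularUnit a b : Matrix (Fin 2) (Fin 2) A) = !![(a : A), b; 0, 1] := rfl

@[simp]
theorem coe_upperUnitriangularUnit_inv (a : Aˣ) (b : A) :
    ((upperUnitriangularUnit a b)⁻¹ : (Matrix (Fin 2) (Fin 2) A)ˣ) =
      !![((a⁻¹ : Aˣ) : A), -((a⁻¹ : Aˣ) : A) * b; 0, 1] := rfl

end Matrix

section Fox

variable {k α : Type*} [CommRing k] [DecidableEq α]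

noncomputable def foxRep (i : α) : FreeGroup α →* (Matrix (Fin 2) (Fin 2) k[FreeGroup α])ˣ :=
  FreeGroup.lift fun j => Matrix.upperUnitriangularUnit (Units.map (of k _) (toUnits (.of j)))
    ((Pi.single i 1 : α → k[FreeGroup α]) j)

theorem exists_foxRep_eq (i : α) (g : FreeGroup α) :
    ∃ b, (foxRep (k := k) i g : Matrix (Fin 2) (Fin 2) k[FreeGroup α]) =
      !![of k _ g, b; 0, 1] := by
  induction g using FreeGroup.induction_on with
  | C1 => exact ⟨0, by simp [Matrix.one_fin_two, one_def]⟩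
  | of j => exact ⟨(Pi.single i 1 : α → k[FreeGroup α]) j, by simp [foxRep]⟩
  | inv_of j _ =>
    exact ⟨-(of k _ (.of j)⁻¹ * (Pi.single i 1 : α → k[FreeGroup α]) j), by simp [foxRep]⟩
  | mul x y hx hy =>
    obtain ⟨b, hb⟩ := hx
    obtain ⟨c, hc⟩ := hy
    exact ⟨of k _ x * c + b, by simp [hb, hc]⟩

noncomputable def foxMatrix (i : α) :
    k[FreeGroup α] →ₐ[k] Matrix (Fin 2) (Fin 2) k[FreeGroup α] :=
  lift k _ _ <| (Units.coeHom _).comp (foxRep i)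

noncomputable def foxDeriv (i : α) : k[FreeGroup α] →ₗ[k] k[FreeGroup α] :=
  Matrix.entryLinearMap k _ 0 1 ∘ₗ (foxMatrix i).toLinearMap

theorem foxDeriv_apply (i : α) (u : k[FreeGroup α]) : foxDeriv i u = foxMatrix i u 0 1 := rfl

theorem foxMatrix_of (i : α) (g : FreeGroup α) :
    foxMatrix i (of k _ g) = (foxRep (k := k) i g : Matrix (Fin 2) (Fin 2) k[FreeGroup α]) :=
  lift_of _ g

theorem foxMatrix_apply_zero_zero (i : α) (u : k[FreeGroup α]) : foxMatrix i u 0 0 = u := by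
  induction u using MonoidAlgebra.induction_on with
  | of g =>
    obtain ⟨b, hb⟩ := exists_foxRep_eq (k := k) i g
    rw [foxMatrix_of, hb]
    rfl
  | add x y hx hy => simp [hx, hy]
  | smul r x hx => simp [hx]

theorem foxDeriv_mul_of_sub_one (i j : α) (u : k[FreeGroup α]) :
    foxDeriv i (u * (of k _ (.of j) - 1)) = (Pi.single j u : α → k[FreeGroup α]) i := by
  have hxj : foxMatrix i (of k _ (.of j) - 1) =
      !![of k _ (.of j) - 1, (Pi.single i 1 : α → k[FreeGroup α]) j; 0, 0] := by
    rw [map_sub, map_one, foxMatrix_of, foxRep, FreeGroup.lift_apply_of,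
      Matrix.coe_upperUnitriangularUnit]
    ext a b
    fin_cases a <;> fin_cases b <;> simp
  rw [foxDeriv_apply, map_mul, hxj, Matrix.mul_apply, Fin.sum_univ_two,
    foxMatrix_apply_zero_zero]
  simp [Pi.single_apply, eq_comm]

theorem foxDeriv_sum_mul_of_sub_one [Fintype α] (i : α) (d : α → k[FreeGroup α]) :
    foxDeriv i (∑ j, d j * (of k _ (.of j) - 1)) = d i := by
  simp_rw [map_sum, foxDeriv_mul_of_sub_one]
  simp

theorem sum_foxDeriv_mul_of_sub_one [Fintype α] {u : k[FreeGroup α]}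
    (hu : lift k k _ 1 u = 0) : ∑ i, foxDeriv i u * (of k _ (.of i) - 1) = u := by
  obtain ⟨c, hc⟩ := (Submodule.mem_span_range_iff_exists_fun _).mp <|
    mem_span_of_sub_one_of_lift_one_eq_zero (FreeGroup.closure_range_of α) hu
  simp only [smul_eq_mul] at hc
  simp_rw [← hc, foxDeriv_sum_mul_of_sub_one]

end Fox

/-- Every element `u` of the augmentation ideal `Δ` of `ZF` can be uniquely written as
`u = Σ_{i=1}^n d_i(u) (x_i - 1)` with coefficients `d_i(u) ∈ ZF` (the left Fox
derivatives of `u`). -/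
theorem stmt5 (n : ℕ) (u : MonoidAlgebra ℤ (FreeGroup (Fin n)))
    (hu : u ∈ RingHom.ker (aug n).toRingHom) :
    ∃! d : Fin n → MonoidAlgebra ℤ (FreeGroup (Fin n)),
      u = ∑ i : Fin n, d i *
        (MonoidAlgebra.of ℤ (FreeGroup (Fin n)) (FreeGroup.of i) - 1) := by
  refine ⟨fun i => foxDeriv i u, (sum_foxDeriv_mul_of_sub_one (RingHom.mem_ker.mp hu)).symm, ?_⟩
  rintro d rfl
  funext i
  exact (foxDeriv_sum_mul_of_sub_one i d).symm
end

section
/- Let R be a normal subgroup of a free group F, let Δ_R be the two-sided ideal of ZF generated by {r - 1 : r ∈ R}, and let Δ be the augmentation ideal. Then for y ∈ F, one has y - 1 ∈ Δ_R·Δ if and only if y ∈ R', the commutator subgroup of R. -/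
/-!
If `y - 1 ∈ Δ_R Δ ⊆ Δ_R` then `y ∈ R`. Fix the transversal `Quotient.out` of `R` in `G` and let
`θ : ℤG → R^ab` be the `ℤ`-linear extension of `g ↦ [g · out(gR)⁻¹]`. The difference
`θ(a w) - θ(a)` only depends on the image of `a` in `ℤ(G/R)`, so `θ(a b) = ε(b) θ(a)` for
`a ∈ Δ_R`; hence `θ` kills `Δ_R Δ`, while `θ(y - 1) = [y]` for `y ∈ R`.
Conversely, `[r, s] - 1 = ((r - 1)(s - 1) - (s - 1)(r - 1)) (sr)⁻¹`, and since `Δ_R Δ` is a right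
ideal, the `g` with `g - 1 ∈ Δ_R Δ` form a subgroup.
-/

open MonoidAlgebra
open scoped commutatorElement

noncomputable def MonoidAlgebra.intExtend {M A : Type*} [AddCommGroup A] (f : M → A) :
    MonoidAlgebra ℤ M →+ A :=
  (Finsupp.liftAddHom fun m ↦ zmultiplesHom A (f m)).comp coeffAddEquiv.toAddMonoidHom

@[simp]
lemma MonoidAlgebra.intExtend_single {M A : Type*} [AddCommGroup A] (f : M → A) (m : M) (n : ℤ) :
    intExtend f (single m n) = n • f m :=
  Finsupp.liftAddHom_apply_single _ _ _

lemma map_commutatorElement_sub_one {G A : Type*} [Group G] [Ring A] (ρ : G →* A) (r s : G) :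
    ρ ⁅r, s⁆ - 1 = ((ρ r - 1) * (ρ s - 1) - (ρ s - 1) * (ρ r - 1)) * ρ (s * r)⁻¹ := by
  have hinv : ρ (s * r) * ρ (s * r)⁻¹ = 1 := by rw [← map_mul, mul_inv_cancel, map_one]
  have hcomm : ⁅r, s⁆ = r * s * (s * r)⁻¹ := by group
  calc ρ ⁅r, s⁆ - 1 = (ρ (r * s) - ρ (s * r)) * ρ (s * r)⁻¹ := by
        rw [sub_mul, hinv, ← map_mul, hcomm]
    _ = _ := by simp only [map_mul]; noncomm_ring

def Subgroup.ofSubOneMem {G A : Type*} [Group G] [Ring A] (ρ : G →* A) (I : AddSubgroup A)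
    (hI : ∀ x ∈ I, ∀ c, x * c ∈ I) : Subgroup G where
  carrier := {g | ρ g - 1 ∈ I}
  one_mem' := by simp
  mul_mem' {p q} hp hq := by
    have h : ρ (p * q) - 1 = (ρ p - 1) * ρ q + (ρ q - 1) := by rw [map_mul]; noncomm_ring
    rw [Set.mem_ofPred_eq, h]; exact add_mem (hI _ hp (ρ q)) hq
  inv_mem' {p} hp := by
    have hinv : ρ p * ρ p⁻¹ = 1 := by rw [← map_mul, mul_inv_cancel, map_one]
    have h : ρ p⁻¹ - 1 = -((ρ p - 1) * ρ p⁻¹) := by rw [sub_mul, hinv]; noncomm_ring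
    rw [Set.mem_ofPred_eq, h]; exact neg_mem (hI _ hp (ρ p⁻¹))

noncomputable section

variable {G : Type*} [Group G] (R : Subgroup G) [R.Normal]

-- `Δ_R`, `Δ` and `Δ_R Δ`, the latter as the additive subgroup generated by the products.
abbrev relAugIdeal : Ideal (MonoidAlgebra ℤ G) :=
  RingHom.ker (mapDomainRingHom ℤ (QuotientGroup.mk' R))

abbrev augIdeal (G : Type*) [Group G] : Ideal (MonoidAlgebra ℤ G) :=
  RingHom.ker (MonoidAlgebra.lift ℤ ℤ G 1).toRingHom

def relAugMulAug : AddSubgroup (MonoidAlgebra ℤ G) :=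
  AddSubgroup.closure {z | ∃ a ∈ relAugIdeal R, ∃ b ∈ augIdeal G, z = a * b}

lemma of_sub_one_mem_augIdeal (g : G) : of ℤ G g - 1 ∈ augIdeal G := by
  simp [RingHom.mem_ker]

lemma of_sub_one_mem_relAugIdeal_iff (g : G) : of ℤ G g - 1 ∈ relAugIdeal R ↔ g ∈ R := by
  rw [RingHom.mem_ker, map_sub, map_one, sub_eq_zero, mapDomainRingHom_apply, of_apply,
    mapDomain_single, ← of_apply, ← map_one (of ℤ (G ⧸ R)), (of_injective (R := ℤ)).eq_iff,
    QuotientGroup.mk'_apply, QuotientGroup.eq_one_iff]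

lemma mul_mem_relAugMulAug {z : MonoidAlgebra ℤ G} (hz : z ∈ relAugMulAug R)
    (c : MonoidAlgebra ℤ G) : z * c ∈ relAugMulAug R := by
  have : relAugMulAug R ≤ (relAugMulAug R).comap (AddMonoidHom.mulRight c) := by
    refine (AddSubgroup.closure_le _).2 fun _ ⟨a, ha, b, hb, h⟩ ↦ AddSubgroup.subset_closure
      ⟨a, ha, b * c, ?_, by rw [h]; exact mul_assoc a b c⟩
    rw [RingHom.mem_ker, map_mul, RingHom.mem_ker.1 hb, zero_mul]
  exact this hz

lemma relAugMulAug_le_relAugIdeal : relAugMulAug R ≤ (relAugIdeal R).toAddSubgroup :=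
  (AddSubgroup.closure_le _).2 fun _ ⟨_, ha, b, _, h⟩ ↦ h ▸ Ideal.mul_mem_right b _ ha

lemma of_sub_one_mul_of_sub_one_mem_relAugMulAug {r : G} (hr : r ∈ R) (s : G) :
    (of ℤ G r - 1) * (of ℤ G s - 1) ∈ relAugMulAug R :=
  AddSubgroup.subset_closure
    ⟨_, (of_sub_one_mem_relAugIdeal_iff R r).2 hr, _, of_sub_one_mem_augIdeal s, rfl⟩

lemma commutator_le_ofSubOneMem_relAugMulAug :
    ⁅R, R⁆ ≤ Subgroup.ofSubOneMem (of ℤ G) (relAugMulAug R)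
      (fun _ hz c ↦ mul_mem_relAugMulAug R hz c) := by
  refine Subgroup.commutator_le.2 fun r hr s hs ↦ ?_
  show of ℤ G ⁅r, s⁆ - 1 ∈ relAugMulAug R
  rw [map_commutatorElement_sub_one]
  exact mul_mem_relAugMulAug R (sub_mem (of_sub_one_mul_of_sub_one_mem_relAugMulAug R hr s)
    (of_sub_one_mul_of_sub_one_mem_relAugMulAug R hs r)) _

def rPart (g : G) : Additive (Abelianization R) :=
  .ofMul (.of ⟨g * (g : G ⧸ R).out⁻¹, by
    rw [← QuotientGroup.eq_one_iff, QuotientGroup.mk_mul, QuotientGroup.mk_inv,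
      QuotientGroup.out_eq', mul_inv_cancel]⟩)

lemma rPart_mul (g w : G) :
    rPart R (g * w) = rPart R g + rPart R ((g : G ⧸ R).out * w) := by
  have hq : (((g : G ⧸ R).out * w : G) : G ⧸ R) = (g * w : G) := by
    rw [QuotientGroup.mk_mul, QuotientGroup.out_eq', QuotientGroup.mk_mul]
  rw [rPart, rPart, rPart, ← ofMul_mul, ← map_mul]
  congr 2
  ext
  simp only [Subgroup.coe_mul, hq]
  group

lemma rPart_sub_rPart_one {y : G} (hy : y ∈ R) :
    rPart R y - rPart R 1 = .ofMul (.of ⟨y, hy⟩) := by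
  have hq : (y : G ⧸ R) = (1 : G) := by rwa [QuotientGroup.mk_one, QuotientGroup.eq_one_iff]
  rw [rPart, rPart, ← ofMul_div, ← map_div]
  congr 2
  ext
  rw [Subgroup.coe_div]
  simp only [hq, one_mul]
  exact mul_div_cancel_right y _

def rPartHom : MonoidAlgebra ℤ G →+ Additive (Abelianization R) :=
  intExtend (rPart R)

lemma rPartHom_mul_of (a : MonoidAlgebra ℤ G) (w : G) :
    rPartHom R (a * of ℤ G w) = rPartHom R a +
      intExtend (fun c : G ⧸ R ↦ rPart R (c.out * w)) (mapDomain (↑) a) := by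
  induction a using MonoidAlgebra.induction_linear with
  | zero => simp
  | add a b ha hb => rw [add_mul, map_add, map_add, mapDomain_add, map_add, ha, hb]; abel
  | single g n =>
    rw [of_apply, single_mul_single, mul_one, mapDomain_single, rPartHom,
      intExtend_single, intExtend_single, intExtend_single, rPart_mul, smul_add]

lemma rPartHom_mul_of_mem_relAugIdeal {a : MonoidAlgebra ℤ G} (ha : a ∈ relAugIdeal R)
    (b : MonoidAlgebra ℤ G) : rPartHom R (a * b) = lift ℤ ℤ G 1 b • rPartHom R a := by
  have ha' : mapDomain ((↑) : G → G ⧸ R) a = 0 := ha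
  induction b using MonoidAlgebra.induction_linear with
  | zero => simp
  | add b c hb hc => rw [mul_add, map_add, map_add, hb, hc, add_smul]
  | single w n =>
    rw [← smul_of, mul_smul_comm, map_zsmul, rPartHom_mul_of, ha',
      map_zero, add_zero, map_zsmul, lift_of]
    simp

lemma rPartHom_eq_zero_of_mem_relAugMulAug {z : MonoidAlgebra ℤ G}
    (hz : z ∈ relAugMulAug R) : rPartHom R z = 0 := by
  refine (AddSubgroup.closure_le (rPartHom R).ker).2 ?_ hz
  rintro _ ⟨a, ha, b, hb, rfl⟩
  rw [SetLike.mem_coe, AddMonoidHom.mem_ker, rPartHom_mul_of_mem_relAugIdeal R ha,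
    show lift ℤ ℤ G 1 b = 0 from hb, zero_smul]

lemma rPartHom_of_sub_one {y : G} (hy : y ∈ R) :
    rPartHom R (of ℤ G y - 1) = .ofMul (.of ⟨y, hy⟩) := by
  rw [map_sub, ← map_one (of ℤ G), rPartHom, of_apply, of_apply, intExtend_single,
    intExtend_single, one_smul, one_smul, rPart_sub_rPart_one]

lemma mem_commutator_of_of_sub_one_mem_relAugMulAug {y : G} (h : of ℤ G y - 1 ∈ relAugMulAug R) :
    y ∈ ⁅R, R⁆ := by
  have hyR : y ∈ R := (of_sub_one_mem_relAugIdeal_iff R y).1 (relAugMulAug_le_relAugIdeal R h)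
  have hab : (⟨y, hyR⟩ : R) ∈ commutator R := by
    have h0 := rPartHom_eq_zero_of_mem_relAugMulAug R h
    rwa [rPartHom_of_sub_one R hyR, ofMul_eq_zero, ← MonoidHom.mem_ker,
      Abelianization.ker_of] at h0
  rw [← R.map_subtype_commutator]
  exact Subgroup.mem_map_of_mem R.subtype hab

theorem of_sub_one_mem_relAugMulAug_iff (y : G) : of ℤ G y - 1 ∈ relAugMulAug R ↔ y ∈ ⁅R, R⁆ :=
  ⟨mem_commutator_of_of_sub_one_mem_relAugMulAug R,
    fun hy ↦ commutator_le_ofSubOneMem_relAugMulAug R hy⟩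

end

/-- Let `R` be a normal subgroup of a free group `F`, `Δ_R` the kernel of the induced
map `ZF → Z(F/R)`, and `Δ` the augmentation ideal (kernel of `ZF → Z`).  For `y ∈ F`,
`y - 1 ∈ Δ_R·Δ` if and only if `y` belongs to the commutator subgroup `R' = [R,R]`. -/
theorem stmt7 {ι : Type*} (R : Subgroup (FreeGroup ι)) [R.Normal]
    (y : FreeGroup ι) :
    (MonoidAlgebra.of ℤ (FreeGroup ι) y - 1) ∈
        AddSubgroup.closure
          {z : MonoidAlgebra ℤ (FreeGroup ι) |
            ∃ a ∈ RingHom.ker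
              (MonoidAlgebra.mapDomainRingHom ℤ (QuotientGroup.mk' R)),
            ∃ b ∈ RingHom.ker
              (MonoidAlgebra.lift ℤ ℤ (FreeGroup ι) 1).toRingHom,
            z = a * b}
      ↔ y ∈ ⁅R, R⁆ :=
  of_sub_one_mem_relAugMulAug_iff R y
end

section
/- Let J be a right ideal of the integral group ring ZF of a free group F that is free as a right ZF-module with basis u_1,…,u_m. For an m × m matrix M = (a_{ij}) over ZF, the following are equivalent: (a) M is invertible over ZF; (b) the elements y_j = Σ_{k=1}^m u_k · a_{kj} (1 ≤ j ≤ m) generate J as a right ideal of ZF. -/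
/-!
Writing `y = u ᵥ* M`, the `u_i` lie in the right ideal generated by the `y_j` exactly when
`u_i = y · c_i = u · (M c_i)` for some column `c_i`; since the `u_k` are linearly independent this
means `M c_i = e_i`, i.e. `M` has a right inverse. It remains to see that `ℤF` is stably finite,
so that a right inverse of a square matrix is two-sided. Free groups are residually finite: a
reduced word of length `n` is realised as a path `n → n - 1 → ⋯ → 0` by permutations of
`{0, …, n}`, one for each generator. Hence `ℤF` embeds into the product of the group rings
`ℤ[F/H]` over the normal subgroups `H` of finite index, and each of these is a finitely
generated `ℤ`-module, hence Noetherian, hence stably finite.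
-/

open Function Equiv Submodule Fin.NatCast

theorem List.prod_apply_of_forall_getElem_apply_succ {β : Type*} :
    ∀ (l : List (Equiv.Perm β)) (p : ℕ → β), (∀ j (hj : j < l.length), l[j] (p (j + 1)) = p j) →
      l.prod (p l.length) = p 0
  | [], _, _ => rfl
  | a :: l, p, h => by
    rw [List.prod_cons, Perm.mul_apply, List.length_cons,
      prod_apply_of_forall_getElem_apply_succ l (fun j ↦ p (j + 1))
        fun j hj ↦ h (j + 1) (Nat.succ_lt_succ hj)]
    exact h 0 (Nat.succ_pos _)

namespace FreeGroup

variable {α : Type*} {L : List (α × Bool)}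

theorem IsReduced.add_toNat_lt (hL : IsReduced L) (c : Bool → Bool) {j j' : ℕ}
    (hj' : j' < L.length) (hjj' : j < j') (h : L[j].1 = L[j'].1) :
    j + (c L[j].2).toNat < j' + (c L[j'].2).toNat := by
  rcases Nat.lt_or_ge (j + 1) j' with hlt | hle
  · have := Bool.toNat_le (c L[j].2)
    omega
  · obtain rfl : j' = j + 1 := by omega
    rw [List.isChain_iff_getElem.mp hL j hj' h]
    omega

/-- The `j`-th letter `(i, b)` of `L` is read as an edge `j + 1 → j` of `σ_i ^ (±1)`; reducedness
of `L` makes the edges carried by each generator a partial injection. -/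
theorem IsReduced.exists_perm_apply_succ (hL : IsReduced L) (i : α) :
    ∃ σ : Perm (Fin (L.length + 1)), ∀ j (hj : j < L.length), L[j].1 = i →
      cond L[j].2 σ σ⁻¹ ((j + 1 : ℕ) : Fin (L.length + 1)) = (j : Fin (L.length + 1)) := by
  have edge_injective (c : Bool → Bool) : Injective fun a : {j : Fin L.length // L[j].1 = i} ↦
      ((a.1 + (c L[(a.1 : ℕ)].2).toNat : ℕ) : Fin (L.length + 1)) := by
    refine StrictMono.injective fun a a' haa' ↦ ?_
    have hbound (x : Fin L.length) := Bool.toNat_le (c L[(x : ℕ)].2)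
    rw [Fin.lt_def, Fin.val_natCast, Fin.val_natCast,
      Nat.mod_eq_of_lt (by have := a.1.2; have := hbound a; omega),
      Nat.mod_eq_of_lt (by have := a'.1.2; have := hbound a'; omega)]
    exact hL.add_toNat_lt c a'.1.2 haa' (a.2.trans a'.2.symm)
  obtain ⟨σ, hσ⟩ := Perm.exists_extending_pair _ _ (edge_injective id) (edge_injective not)
  refine ⟨σ, fun j hj hi ↦ ?_⟩
  have hσj := hσ ⟨⟨j, hj⟩, hi⟩
  cases hb : L[j].2 <;> simp only [hb, id, Bool.not_true, Bool.not_false, Bool.toNat_true,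
    Bool.toNat_false, add_zero, cond_true, cond_false] at hσj ⊢
  · exact Perm.inv_eq_iff_eq.mpr hσj.symm
  · exact hσj

theorem IsReduced.exists_monoidHom_perm_apply_ne_one (hL : IsReduced L) (hne : L ≠ []) :
    ∃ φ : FreeGroup α →* Perm (Fin (L.length + 1)), φ (mk L) ≠ 1 := by
  choose σ hσ using hL.exists_perm_apply_succ
  refine ⟨lift σ, fun h ↦ hne (List.length_eq_zero_iff.mp ?_)⟩
  have hpath := List.prod_apply_of_forall_getElem_apply_succ
    (L.map fun x ↦ cond x.2 (σ x.1) (σ x.1)⁻¹) (Nat.cast : ℕ → Fin (L.length + 1))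
    fun j hj ↦ by
      have hj : j < L.length := by simpa using hj
      simpa using hσ L[j].1 j hj rfl
  rw [← lift_mk, h, List.length_map, Perm.one_apply, Fin.ext_iff, Fin.val_natCast,
    Nat.mod_eq_of_lt (Nat.lt_succ_self _)] at hpath
  simpa using hpath

instance : Group.ResiduallyFinite (FreeGroup α) :=
  Group.residuallyFinite_of_forall_exists_finite_monoidHom.{_, 0} fun w hw ↦ by
    classical
    obtain ⟨φ, hφ⟩ := isReduced_toWord.exists_monoidHom_perm_apply_ne_one
      (toWord_eq_nil_iff.not.mpr hw)
    exact ⟨_, _, inferInstance, φ, by rwa [mk_toWord] at hφ⟩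

end FreeGroup

theorem Group.ResiduallyFinite.exists_injOn_quotient {G : Type*} [Group G] [ResiduallyFinite G]
    (T : Finset G) :
    ∃ H : FiniteIndexNormalSubgroup G, Set.InjOn (QuotientGroup.mk : G → G ⧸ H.toSubgroup) T := by
  classical
  have separate (p : G × G) : ∃ H : FiniteIndexNormalSubgroup G,
      p.1 ≠ p.2 → (p.1 : G ⧸ H.toSubgroup) ≠ p.2 := by
    by_cases h : p.1 = p.2
    · exact ⟨.ofSubgroup ⊤, absurd h⟩
    · exact (exists_finiteIndexNormalSubgroup_of_residuallyFinite _ _ h).imp fun _ hH _ ↦ hH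
  choose K hK using separate
  have : Nonempty (FiniteIndexNormalSubgroup G)ᵒᵈ := ⟨OrderDual.toDual (.ofSubgroup ⊤)⟩
  obtain ⟨H, hH⟩ := Finset.exists_le (α := (FiniteIndexNormalSubgroup G)ᵒᵈ)
    ((T ×ˢ T).image fun p ↦ OrderDual.toDual (K p))
  refine ⟨OrderDual.ofDual H, fun g hg g' hg' hgg' ↦ by_contra fun hne ↦ hK (g, g') hne ?_⟩
  have hle : OrderDual.ofDual H ≤ K (g, g') :=
    hH _ (Finset.mem_image_of_mem _ (Finset.mem_product.mpr ⟨hg, hg'⟩))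
  exact QuotientGroup.eq.mpr (hle (QuotientGroup.eq.mp hgg'))

instance Pi.isDedekindFiniteMonoid {ι : Type*} (M : ι → Type*) [∀ i, Monoid (M i)]
    [∀ i, IsDedekindFiniteMonoid (M i)] : IsDedekindFiniteMonoid (∀ i, M i) where
  mul_eq_one_symm h := funext fun i ↦ mul_eq_one_symm (congrFun h i)

instance Pi.isStablyFiniteRing {ι : Type*} (R : ι → Type*) [∀ i, Semiring (R i)]
    [∀ i, IsStablyFiniteRing (R i)] : IsStablyFiniteRing (∀ i, R i) where
  isDedekindFiniteMonoid n := (MulEquivClass.isDedekindFiniteMonoid_iff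
    (Matrix.piRingEquiv (β := R) (n := Fin n))).mpr inferInstance

namespace MonoidAlgebra

variable (R : Type*) [Ring R] (G : Type*) [Group G]

instance isNoetherianRing_of_finite [IsNoetherianRing R] [Finite G] :
    IsNoetherianRing (MonoidAlgebra R G) :=
  isNoetherian_of_tower R (isNoetherian_of_isNoetherianRing_of_finite R _)

theorem injective_pi_mapDomainRingHom_mk [Group.ResiduallyFinite G] :
    Injective (RingHom.pi fun H : FiniteIndexNormalSubgroup G ↦
      mapDomainRingHom R (QuotientGroup.mk' H.toSubgroup)) := by
  refine (injective_iff_map_eq_zero _).mpr fun x hx ↦ ?_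
  obtain ⟨H, hH⟩ := Group.ResiduallyFinite.exists_injOn_quotient x.coeff.support
  refine coeff_injective (Finsupp.mapDomain_injOn _ hH Set.Subset.rfl (by simp) ?_)
  simpa using congrArg coeff (congrFun hx H)

instance isStablyFiniteRing [IsNoetherianRing R] [Group.ResiduallyFinite G] :
    IsStablyFiniteRing (MonoidAlgebra R G) :=
  .of_injective _ (injective_pi_mapDomainRingHom_mk R G)

end MonoidAlgebra

section RightIdeal

open Matrix MulOpposite

variable {A : Type*} [Ring A] {ι κ : Type*} [Fintype ι] [Fintype κ]

theorem mem_span_op_range_iff_exists_dotProduct {v : ι → A} {x : A} :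
    x ∈ span Aᵐᵒᵖ (Set.range v) ↔ ∃ c, v ⬝ᵥ c = x := by
  simp only [mem_span_range_iff_exists_fun, dotProduct]
  exact ⟨fun ⟨c, hc⟩ ↦ ⟨fun i ↦ (c i).unop, hc⟩, fun ⟨c, hc⟩ ↦ ⟨fun i ↦ op (c i), hc⟩⟩

theorem LinearIndependent.dotProduct_injective {v : ι → A} (hv : LinearIndependent Aᵐᵒᵖ v) :
    Injective (v ⬝ᵥ ·) := fun c d h ↦ funext fun i ↦ op_injective <|
  Fintype.linearIndependent_iffₛ.mp hv (op ∘ c) (op ∘ d)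
    (by simpa only [Function.comp_apply, op_smul_eq_mul, dotProduct] using h) i

theorem Matrix.exists_mul_eq_one_iff [DecidableEq ι] {M : Matrix ι κ A} :
    (∃ N : Matrix κ ι A, M * N = 1) ↔ ∀ i, ∃ c, M *ᵥ c = Pi.single i 1 := by
  refine ⟨fun ⟨N, hN⟩ i ↦ ⟨fun k ↦ N k i, ?_⟩, fun h ↦ ?_⟩
  · rw [← one_mulVec (Pi.single i 1), ← hN, ← mulVec_mulVec, mulVec_single_one]
    rfl
  · choose c hc using h
    refine ⟨(of c)ᵀ, ext fun k i ↦ ?_⟩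
    rw [one_eq_pi_single, Pi.single_comm, ← hc i]
    rfl

theorem span_range_vecMul_eq_span_range_iff [DecidableEq ι] {u : ι → A}
    (hu : LinearIndependent Aᵐᵒᵖ u) (M : Matrix ι κ A) :
    span Aᵐᵒᵖ (Set.range (u ᵥ* M)) = span Aᵐᵒᵖ (Set.range u) ↔ ∃ N : Matrix κ ι A, M * N = 1 := by
  have hle : span Aᵐᵒᵖ (Set.range (u ᵥ* M)) ≤ span Aᵐᵒᵖ (Set.range u) :=
    span_le.mpr <| Set.range_subset_iff.mpr fun j ↦
      mem_span_op_range_iff_exists_dotProduct.mpr ⟨fun k ↦ M k j, rfl⟩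
  rw [le_antisymm_iff, and_iff_right hle, span_le, Set.range_subset_iff, Matrix.exists_mul_eq_one_iff]
  refine forall_congr' fun i ↦ ?_
  rw [SetLike.mem_coe, mem_span_op_range_iff_exists_dotProduct]
  refine exists_congr fun c ↦ ?_
  rw [← dotProduct_mulVec, ← hu.dotProduct_injective.eq_iff, dotProduct_single, mul_one]

end RightIdeal

theorem Module.Basis.span_range_coe {R M ι : Type*} [Semiring R] [AddCommMonoid M] [Module R M]
    {J : Submodule R M} (b : Module.Basis ι R J) : span R (Set.range fun i ↦ (b i : M)) = J := by
  have := congrArg (map J.subtype) b.span_eq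
  rwa [map_span, ← Set.range_comp, map_subtype_top] at this

/-- Let `J` be a right ideal of the group ring `ZF` of a free group `F` which is free
as a right `ZF`-module with basis `u_1, …, u_m`.  For an `m × m` matrix `M = (a_{ij})`
over `ZF`, `M` is invertible over `ZF` if and only if the elements
`y_j = Σ_k u_k · a_{kj}` generate `J` as a right ideal. -/
theorem stmt9 {ι : Type*} (m : ℕ)
    (J : Submodule (MonoidAlgebra ℤ (FreeGroup ι))ᵐᵒᵖ (MonoidAlgebra ℤ (FreeGroup ι)))
    (u : Fin m → MonoidAlgebra ℤ (FreeGroup ι))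
    (b : Module.Basis (Fin m) (MonoidAlgebra ℤ (FreeGroup ι))ᵐᵒᵖ J)
    (hb : ∀ k, (b k : MonoidAlgebra ℤ (FreeGroup ι)) = u k)
    (M : Matrix (Fin m) (Fin m) (MonoidAlgebra ℤ (FreeGroup ι))) :
    (∃ N : Matrix (Fin m) (Fin m) (MonoidAlgebra ℤ (FreeGroup ι)),
        M * N = 1 ∧ N * M = 1) ↔
      Submodule.span (MonoidAlgebra ℤ (FreeGroup ι))ᵐᵒᵖ
        (Set.range fun j => ∑ k : Fin m, u k * M k j) = J := by
  obtain rfl : (fun k ↦ (b k : MonoidAlgebra ℤ (FreeGroup ι))) = u := funext hb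
  have hu : LinearIndependent _ fun k ↦ (b k : MonoidAlgebra ℤ (FreeGroup ι)) :=
    b.linearIndependent.map' J.subtype J.ker_subtype
  rw [exists_congr fun N ↦ and_iff_left_of_imp mul_eq_one_symm,
    ← span_range_vecMul_eq_span_range_iff hu M, b.span_range_coe]
  rfl
end

section
/- Let F be the free group of rank 2 with basis x₁, x₂. Every element h of the commutator subgroup of the free metabelian group M₂ = F/F'' can be written as [x₁, x₂]^w for some element w of the group ring Z(M₂/M₂') acting by conjugation-induced module structure; consequently, M₂'/M₂'' (which equals M₂' since M₂ is metabelian) is a cyclic module over Z(M₂/M₂') generated by [x₁, x₂]. -/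
/-!
Modulo the normal closure `N` of `[x₁, x₂]` the images of the two generators commute, and they
generate `M₂ ⧸ N`, so this quotient is abelian and `M₂' ≤ N`; the reverse inclusion holds because
`M₂'` is normal and contains `[x₁, x₂]`.
-/

/-- The free metabelian group of rank 2: `M₂ = F/F''` where `F` is free of rank 2. -/
abbrev FM2 : Type :=
  FreeGroup (Fin 2) ⧸ ⁅commutator (FreeGroup (Fin 2)), commutator (FreeGroup (Fin 2))⁆

/-- The images of the free generators in `M₂`. -/
abbrev fm2Gen (i : Fin 2) : FM2 := QuotientGroup.mk (FreeGroup.of i)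

open scoped commutatorElement

namespace Subgroup

variable {G : Type*} [Group G]

theorem commute_of_closure_eq_top {s : Set G} (hs : closure s = ⊤)
    (hcomm : ∀ x ∈ s, ∀ y ∈ s, Commute x y) (g h : G) : Commute g h := by
  have hle := closure_le_centralizer_centralizer s
  rw [hs] at hle
  exact Set.centralizer_centralizer_comm_of_comm (fun x hx y hy => (hcomm x hx y hy).eq)
    g (hle (mem_top g)) h (hle (mem_top h))

theorem commutator_eq_normalClosure_of_closure_pair_eq_top {a b : G}
    (hab : closure {a, b} = ⊤) : _root_.commutator G = normalClosure {⁅a, b⁆} := by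
  set N := normalClosure ({⁅a, b⁆} : Set G)
  refine le_antisymm (commutator_le.2 fun g _ h _ => ?_)
    (normalClosure_le_normal (Set.singleton_subset_iff.2
      (commutator_mem_commutator (mem_top a) (mem_top b))))
  let π := QuotientGroup.mk' N
  have hπ_commute : Commute (π a) (π b) := by
    rw [← commutatorElement_eq_one_iff_commute, ← map_commutatorElement]
    exact (QuotientGroup.eq_one_iff _).2 (subset_normalClosure rfl)
  have hπ_closure : closure {π a, π b} = ⊤ := by
    rw [← Set.image_pair, ← MonoidHom.map_closure, hab,
      map_top_of_surjective _ (QuotientGroup.mk'_surjective N)]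
  rw [← QuotientGroup.eq_one_iff, ← QuotientGroup.mk'_apply, map_commutatorElement,
    commutatorElement_eq_one_iff_commute]
  refine commute_of_closure_eq_top hπ_closure ?_ (π g) (π h)
  rintro x (rfl | rfl) y (rfl | rfl)
  exacts [Commute.refl _, hπ_commute, hπ_commute.symm, Commute.refl _]

end Subgroup

theorem closure_fm2Gen_pair_eq_top : Subgroup.closure {fm2Gen 0, fm2Gen 1} = ⊤ := by
  have hgen : {fm2Gen 0, fm2Gen 1} = QuotientGroup.mk' _ '' Set.range FreeGroup.of := by
    ext x
    simp [Fin.exists_fin_two, eq_comm]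
  rw [hgen, ← MonoidHom.map_closure, FreeGroup.closure_range_of,
    Subgroup.map_top_of_surjective _ (QuotientGroup.mk'_surjective _)]

/-- As `M₂'` is abelian, the normal closure of `[x₁, x₂]` is the `ℤ(M₂/M₂')`-submodule of `M₂'`
generated by `[x₁, x₂]`. -/
theorem stmt11 :
    commutator FM2 = Subgroup.normalClosure {⁅fm2Gen 0, fm2Gen 1⁆} :=
  Subgroup.commutator_eq_normalClosure_of_closure_pair_eq_top closure_fm2Gen_pair_eq_top
end

section
/- Let A₂ = Z² be free abelian of rank 2 and R = Z[A₂] its integral group ring (Laurent polynomials in two variables). If w ∈ R and the ideal of R generated by w·p₁ and w·p₂ equals the ideal generated by p₁ and p₂, where (p₁, p₂) = (x₂ - 1, -(x₁ - 1)) (the abelianized Fox derivatives of [x₁,x₂]), then w is a unit of R, i.e., w = ± g for some g ∈ A₂. -/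
/-!
If `p₁, p₂ ∈ (w p₁, w p₂)`, the coefficients of these memberships form a matrix `M` with
`(1 - w M) (p₁, p₂)ᵀ = 0`; multiplying out the two rows gives `det (1 - w M) · p₁ p₂ = 0`,
and since `R` is a domain and `p₁ p₂ ≠ 0`, `det (1 - w M) = 1 - w · (…) = 0`, so `w` is a unit.
Finally, `ℤ²` has the two-unique-sums property, so the units of `ℤ[ℤ²]` are the trivial ones.
-/

open AddMonoidAlgebra

theorem isUnit_of_span_le_span_mul_pair {R : Type*} [CommRing R] [IsDomain R] {w p q : R}
    (hp : p ≠ 0) (hq : q ≠ 0) (h : Ideal.span {p, q} ≤ Ideal.span {w * p, w * q}) :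
    IsUnit w := by
  obtain ⟨a, b, hab⟩ := Ideal.mem_span_pair.1 (h (Ideal.subset_span (Set.mem_insert p _)))
  obtain ⟨c, d, hcd⟩ :=
    Ideal.mem_span_pair.1 (h (Ideal.subset_span (Set.mem_insert_of_mem _ rfl)))
  have hdet : ((1 - w * a) * (1 - w * d) - w * b * (w * c)) * (p * q) = 0 := by
    linear_combination (-(1 - w * d) * q) * hab + (-(w * b) * q) * hcd
  have hdet₀ : (1 - w * a) * (1 - w * d) - w * b * (w * c) = 0 :=
    (mul_eq_zero.1 hdet).resolve_right (mul_ne_zero hp hq)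
  exact IsUnit.of_mul_eq_one (a + d - w * a * d + w * b * c) (by linear_combination -hdet₀)

namespace AddMonoidAlgebra

variable {R A : Type*}

theorem single_ne_one [Semiring R] [Nontrivial R] [AddZeroClass A] {a : A} (ha : a ≠ 0) :
    single a (1 : R) ≠ 1 := by
  rw [one_def]
  exact fun h => ha ((single_left_inj one_ne_zero).1 h)

variable [CommSemiring R] [NoZeroDivisors R] [AddMonoid A] [TwoUniqueSums A]

theorem card_support_eq_one_of_mul_eq_one [Nontrivial R] {f g : R[A]} (hfg : f * g = 1) :
    f.coeff.support.card = 1 ∧ g.coeff.support.card = 1 := by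
  have hf : f.coeff.support.Nonempty := by
    rw [Finsupp.support_nonempty_iff, Ne, coeff_eq_zero]; rintro rfl; simp at hfg
  have hg : g.coeff.support.Nonempty := by
    rw [Finsupp.support_nonempty_iff, Ne, coeff_eq_zero]; rintro rfl; simp at hfg
  have hsum : ∀ {a b}, a ∈ f.coeff.support → b ∈ g.coeff.support →
      UniqueAdd f.coeff.support g.coeff.support a b → a + b = 0 := by
    intro a b ha hb hu
    have hab : (f * g).coeff (a + b) ≠ 0 := by
      rw [coeff_mul_add_of_uniqueAdd hu]
      exact mul_ne_zero (Finsupp.mem_support_iff.1 ha) (Finsupp.mem_support_iff.1 hb)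
    by_contra hne
    rw [hfg, one_def, coeff_single, Finsupp.single_eq_of_ne hne] at hab
    exact hab rfl
  have hle : ¬ 1 < f.coeff.support.card * g.coeff.support.card := by
    intro hlt
    obtain ⟨⟨a₁, b₁⟩, h₁, ⟨a₂, b₂⟩, h₂, hne, hu₁, hu₂⟩ :=
      TwoUniqueSums.uniqueAdd_of_one_lt_card hlt
    rw [Finset.mem_product] at h₁ h₂
    obtain ⟨rfl, rfl⟩ :=
      hu₁ h₂.1 h₂.2 ((hsum h₂.1 h₂.2 hu₂).trans (hsum h₁.1 h₁.2 hu₁).symm)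
    exact hne rfl
  have := hf.card_pos
  have := hg.card_pos
  constructor <;> nlinarith

theorem exists_single_of_isUnit {f : R[A]} (hf : IsUnit f) :
    ∃ a r, IsUnit r ∧ f = single a r := by
  rcases subsingleton_or_nontrivial R with hR | hR
  · exact ⟨0, 0, isUnit_of_subsingleton _, Subsingleton.elim _ _⟩
  obtain ⟨g, hfg⟩ := hf.exists_right_inv
  obtain ⟨hf1, hg1⟩ := card_support_eq_one_of_mul_eq_one hfg
  obtain ⟨a, r, -, hfa⟩ := Finsupp.card_support_eq_one'.1 hf1
  obtain ⟨b, s, -, hgb⟩ := Finsupp.card_support_eq_one'.1 hg1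
  obtain rfl : f = single a r := coeff_injective hfa
  obtain rfl : g = single b s := coeff_injective hgb
  rw [single_mul_single, one_def, single_inj] at hfg
  rcases hfg with ⟨-, hrs⟩ | ⟨-, h10⟩
  · exact ⟨a, r, IsUnit.of_mul_eq_one _ hrs, rfl⟩
  · exact absurd h10 one_ne_zero

end AddMonoidAlgebra

/-- In the Laurent polynomial ring `R = Z[x₁^{±1}, x₂^{±1}]` (the group ring of `Z²`),
let `p₁ = x₂ - 1` and `p₂ = 1 - x₁` (the abelianized Fox derivatives of `[x₁,x₂]`).
If `w ∈ R` and the ideal generated by `w·p₁, w·p₂` equals the ideal generated by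
`p₁, p₂`, then `w` is a unit of `R`, i.e. `w = ± g` for a monomial `g`. -/
theorem stmt12 (w : AddMonoidAlgebra ℤ (ℤ × ℤ))
    (p₁ p₂ : AddMonoidAlgebra ℤ (ℤ × ℤ))
    (hp₁ : p₁ = AddMonoidAlgebra.single ((0 : ℤ), (1 : ℤ)) (1 : ℤ) - 1)
    (hp₂ : p₂ = 1 - AddMonoidAlgebra.single ((1 : ℤ), (0 : ℤ)) (1 : ℤ))
    (h : Ideal.span {w * p₁, w * p₂} = Ideal.span {p₁, p₂}) :
    IsUnit w ∧ ∃ g : ℤ × ℤ,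
      w = AddMonoidAlgebra.single g (1 : ℤ) ∨
      w = AddMonoidAlgebra.single g (-1 : ℤ) := by
  have hp₁0 : p₁ ≠ 0 := hp₁ ▸ sub_ne_zero.2 (single_ne_one (by simp))
  have hp₂0 : p₂ ≠ 0 := hp₂ ▸ sub_ne_zero.2 (single_ne_one (by simp)).symm
  have hw : IsUnit w := isUnit_of_span_le_span_mul_pair hp₁0 hp₂0 h.ge
  obtain ⟨g, r, hr, rfl⟩ := exists_single_of_isUnit hw
  refine ⟨hw, g, ?_⟩
  rcases Int.isUnit_iff.1 hr with rfl | rfl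
  exacts [Or.inl rfl, Or.inr rfl]
end

section
/- There are no Δ-primitive elements in the free metabelian group M_n when n is odd; that is, no element u ∈ M_n has the property that its abelianized Fox derivatives d₁(u),…,d_n(u) generate the augmentation ideal Δ of Z[Z^n] as an ideal. -/
/-- The abelianization map `F_n →* Z^n`. -/
noncomputable def abel (n : ℕ) : FreeGroup (Fin n) →* Multiplicative (Fin n → ℤ) :=
  FreeGroup.lift fun i => Multiplicative.ofAdd (Pi.single i 1)

/-- The induced ring homomorphism `ZF → Z[Z^n]`. -/
noncomputable def abelRing (n : ℕ) :
    MonoidAlgebra ℤ (FreeGroup (Fin n)) →+*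
      MonoidAlgebra ℤ (Multiplicative (Fin n → ℤ)) :=
  MonoidAlgebra.mapDomainRingHom ℤ (abel n)

/-- The augmentation homomorphism `Z[Z^n] → Z`. -/
noncomputable def augA (n : ℕ) :
    MonoidAlgebra ℤ (Multiplicative (Fin n → ℤ)) →ₐ[ℤ] ℤ :=
  MonoidAlgebra.lift ℤ ℤ (Multiplicative (Fin n → ℤ)) 1

/-!
Write `t_j` for the variables of `ℤ[ℤⁿ]` and `D_j` for the abelianized Fox derivatives of `u`.
Abelianizing the fundamental formula gives `t^{ab u} = 1 + ∑ D_j (t_j - 1)`. If the `D_j`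
generate `Δ`, they have augmentation `0`, and the characters `t^x ↦ 1 + x_k ε` into dual numbers
force `ab u = 0`, i.e. `∑ D_j (t_j - 1) = 0`. Let `M_{jk}` be the linear coefficient of `D_j` in
the direction `k`. Since each `t_i - 1` lies in `Δ = (D_j)`, `M` has a left inverse over `ℤ`;
reading the syzygy to second order shows that `M` is skew-symmetric, hence singular for odd `n`.
-/

open DualNumber TrivSqZeroExt

theorem Matrix.det_eq_zero_of_transpose_eq_neg {R m : Type*} [CommRing R] [IsAddTorsionFree R]
    [Fintype m] [DecidableEq m] (hm : Odd (Fintype.card m)) {M : Matrix m m R}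
    (hM : M.transpose = -M) : M.det = 0 := by
  rw [← self_eq_neg]
  calc M.det = M.transpose.det := M.det_transpose.symm
    _ = -M.det := by rw [hM, Matrix.det_neg, hm.neg_one_pow, neg_one_mul]

theorem DualNumber.snd_snd_mul {R : Type*} [CommRing R] (x y : DualNumber (DualNumber R)) :
    (x * y).snd.snd = x.fst.fst * y.snd.snd + x.fst.snd * y.snd.fst +
      x.snd.fst * y.fst.snd + x.snd.snd * y.fst.fst := by
  simp only [TrivSqZeroExt.snd_mul, smul_eq_mul, MulOpposite.smul_eq_mul_unop,
    MulOpposite.unop_op, snd_add]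
  ring

section Characters

variable {G : Type*} [AddCommGroup G]

def dualChar {R : Type*} [CommRing R] (f : G →+ R) : Multiplicative G →* DualNumber R where
  toFun g := 1 + f g.toAdd • ε
  map_one' := by simp
  map_mul' g h := by ext <;> simp [add_comm]

noncomputable def augmentation : MonoidAlgebra ℤ (Multiplicative G) →ₐ[ℤ] ℤ :=
  MonoidAlgebra.lift ℤ ℤ _ 1

noncomputable def firstOrderChar (f : G →+ ℤ) :
    MonoidAlgebra ℤ (Multiplicative G) →ₐ[ℤ] DualNumber ℤ :=
  MonoidAlgebra.lift ℤ _ _ (dualChar f)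

noncomputable def augDeriv (f : G →+ ℤ) : MonoidAlgebra ℤ (Multiplicative G) →+ ℤ where
  toFun a := (firstOrderChar f a).snd
  map_zero' := by simp
  map_add' _ _ := by simp

variable (f g : G →+ ℤ) (a b : MonoidAlgebra ℤ (Multiplicative G))

theorem augDeriv_apply : augDeriv f a = (firstOrderChar f a).snd := rfl

theorem fst_firstOrderChar : (firstOrderChar f a).fst = augmentation a := by
  induction a using MonoidAlgebra.induction_linear with
  | zero => simp
  | add x y hx hy => simp [hx, hy]
  | single x r => simp [firstOrderChar, augmentation, dualChar]

@[simp]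
theorem augmentation_single (x : Multiplicative G) (r : ℤ) :
    augmentation (MonoidAlgebra.single x r) = r := by
  simp [augmentation]

@[simp]
theorem augDeriv_single (x : Multiplicative G) (r : ℤ) :
    augDeriv f (MonoidAlgebra.single x r) = r * f x.toAdd := by
  simp [augDeriv_apply, firstOrderChar, dualChar]

theorem augDeriv_mul :
    augDeriv f (a * b) = augmentation a * augDeriv f b + augDeriv f a * augmentation b := by
  simp [augDeriv_apply, fst_firstOrderChar, mul_comm]

@[simp]
theorem augDeriv_one : augDeriv f 1 = 0 := by
  simp [augDeriv_apply]

/-- `t^x ↦ (1 + f x • ε) (1 + g x • ε')`; `augDeriv₂ f g` is the coefficient of `ε ε'`. -/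
noncomputable def secondOrderChar (f g : G →+ ℤ) :
    MonoidAlgebra ℤ (Multiplicative G) →ₐ[ℤ] DualNumber (DualNumber ℤ) :=
  MonoidAlgebra.lift ℤ _ _
    ((inlHom _ _).toMonoidHom.comp (dualChar f) * dualChar ((Int.castAddHom _).comp g))

noncomputable def augDeriv₂ (f g : G →+ ℤ) : MonoidAlgebra ℤ (Multiplicative G) →+ ℤ where
  toFun a := (secondOrderChar f g a).snd.snd
  map_zero' := by simp
  map_add' _ _ := by simp

theorem augDeriv₂_apply : augDeriv₂ f g a = (secondOrderChar f g a).snd.snd := rfl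

theorem fst_secondOrderChar : (secondOrderChar f g a).fst = firstOrderChar f a := by
  induction a using MonoidAlgebra.induction_linear with
  | zero => simp
  | add x y hx hy => simp [hx, hy]
  | single x r => simp [firstOrderChar, secondOrderChar, dualChar, mul_add]

theorem fst_snd_secondOrderChar : (secondOrderChar f g a).snd.fst = augDeriv g a := by
  induction a using MonoidAlgebra.induction_linear with
  | zero => simp
  | add x y hx hy => simp [hx, hy]
  | single x r => simp [augDeriv_apply, firstOrderChar, secondOrderChar, dualChar]

theorem augDeriv₂_mul :
    augDeriv₂ f g (a * b) = augmentation a * augDeriv₂ f g b + augDeriv f a * augDeriv g b +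
      augDeriv g a * augDeriv f b + augDeriv₂ f g a * augmentation b := by
  simp only [augDeriv₂_apply, map_mul, DualNumber.snd_snd_mul, fst_secondOrderChar,
    fst_snd_secondOrderChar, fst_firstOrderChar, augDeriv_apply]

end Characters

section LaurentPolynomials

variable {n : ℕ}

noncomputable def laurentVar (j : Fin n) : MonoidAlgebra ℤ (Multiplicative (Fin n → ℤ)) :=
  MonoidAlgebra.of ℤ _ (Multiplicative.ofAdd (Pi.single j 1))

noncomputable abbrev coordDeriv (k : Fin n) : MonoidAlgebra ℤ (Multiplicative (Fin n → ℤ)) →+ ℤ :=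
  augDeriv (Pi.evalAddMonoidHom (fun _ => ℤ) k)

@[simp]
theorem augmentation_laurentVar (j : Fin n) : augmentation (laurentVar j) = 1 := by
  simp [laurentVar]

@[simp]
theorem augDeriv_laurentVar (f : (Fin n → ℤ) →+ ℤ) (j : Fin n) :
    augDeriv f (laurentVar j) = f (Pi.single j 1) := by
  simp [laurentVar]

theorem augDeriv₂_mul_laurentVar_sub_one (f g : (Fin n → ℤ) →+ ℤ) (j : Fin n)
    {a : MonoidAlgebra ℤ (Multiplicative (Fin n → ℤ))} (ha : augmentation a = 0) :
    augDeriv₂ f g (a * (laurentVar j - 1)) =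
      augDeriv f a * g (Pi.single j 1) + augDeriv g a * f (Pi.single j 1) := by
  simp [augDeriv₂_mul, ha]

theorem eq_one_of_of_eq_one_add_sum {D : Fin n → MonoidAlgebra ℤ (Multiplicative (Fin n → ℤ))}
    (hD : ∀ j, augmentation (D j) = 0) {x : Multiplicative (Fin n → ℤ)}
    (h : MonoidAlgebra.of ℤ _ x = 1 + ∑ j, D j * (laurentVar j - 1)) : x = 1 := by
  ext k
  simpa [augDeriv_mul, hD] using congrArg (coordDeriv k) h

theorem coordDeriv_add_coordDeriv_eq_zero {D : Fin n → MonoidAlgebra ℤ (Multiplicative (Fin n → ℤ))}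
    (hD : ∀ j, augmentation (D j) = 0) (h : ∑ j, D j * (laurentVar j - 1) = 0) (i k : Fin n) :
    coordDeriv i (D k) + coordDeriv k (D i) = 0 := by
  have := congrArg (augDeriv₂ (Pi.evalAddMonoidHom (fun _ => ℤ) i) (Pi.evalAddMonoidHom _ k)) h
  simpa [augDeriv₂_mul_laurentVar_sub_one _ _ _ (hD _), Pi.single_apply, Finset.sum_add_distrib]
    using this

theorem augmentation_eq_zero_of_span_eq_ker
    {D : Fin n → MonoidAlgebra ℤ (Multiplicative (Fin n → ℤ))}
    (h : Ideal.span (Set.range D) = RingHom.ker augmentation.toRingHom) (j : Fin n) :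
    augmentation (D j) = 0 :=
  (h ▸ Ideal.subset_span ⟨j, rfl⟩ : D j ∈ RingHom.ker augmentation.toRingHom)

theorem exists_mul_eq_one_of_span_eq_ker
    {D : Fin n → MonoidAlgebra ℤ (Multiplicative (Fin n → ℤ))}
    (h : Ideal.span (Set.range D) = RingHom.ker augmentation.toRingHom) :
    ∃ C : Matrix (Fin n) (Fin n) ℤ, C * Matrix.of (fun j k => coordDeriv k (D j)) = 1 := by
  have hD := augmentation_eq_zero_of_span_eq_ker h
  have hvar (i : Fin n) : ∃ c : Fin n → MonoidAlgebra ℤ (Multiplicative (Fin n → ℤ)),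
      ∑ j, c j • D j = laurentVar i - 1 := by
    refine (Submodule.mem_span_range_iff_exists_fun _).mp ?_
    rw [← Ideal.span, h]
    simp
  choose c hc using hvar
  refine ⟨Matrix.of fun i j => augmentation (c i j), ?_⟩
  ext i k
  have := congrArg (coordDeriv k) (hc i)
  simpa [Matrix.mul_apply, Matrix.one_apply, augDeriv_mul, hD, Pi.single_apply, eq_comm] using this

theorem span_ne_ker_augmentation_of_sum_eq_zero (hn : Odd n)
    {D : Fin n → MonoidAlgebra ℤ (Multiplicative (Fin n → ℤ))}
    (hsyz : ∑ j, D j * (laurentVar j - 1) = 0) :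
    Ideal.span (Set.range D) ≠ RingHom.ker augmentation.toRingHom := by
  intro h
  obtain ⟨C, hC⟩ := exists_mul_eq_one_of_span_eq_ker h
  have hskew : (Matrix.of fun j k => coordDeriv k (D j)).transpose =
      -Matrix.of fun j k => coordDeriv k (D j) := by
    ext i k
    simpa [eq_neg_iff_add_eq_zero, add_comm] using
      coordDeriv_add_coordDeriv_eq_zero (augmentation_eq_zero_of_span_eq_ker h) hsyz i k
  have hdet := congrArg Matrix.det hC
  rw [Matrix.det_mul, Matrix.det_eq_zero_of_transpose_eq_neg (by simpa using hn) hskew, mul_zero,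
    Matrix.det_one] at hdet
  exact zero_ne_one hdet

end LaurentPolynomials

theorem aug_of (n : ℕ) (u : FreeGroup (Fin n)) : aug n (MonoidAlgebra.of ℤ _ u) = 1 := by
  rw [aug, MonoidAlgebra.lift_of, MonoidHom.one_apply]

theorem abelRing_of (n : ℕ) (u : FreeGroup (Fin n)) :
    abelRing n (MonoidAlgebra.of ℤ _ u) = MonoidAlgebra.of ℤ _ (abel n u) :=
  MonoidAlgebra.mapDomain_single

theorem abelRing_of_of (n : ℕ) (j : Fin n) :
    abelRing n (MonoidAlgebra.of ℤ _ (FreeGroup.of j)) = laurentVar j := by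
  rw [abelRing_of, abel, FreeGroup.lift_apply_of, laurentVar]

/-- There are no `Δ`-primitive elements in the free metabelian group `M_n` for odd
`n`: no element `u` has abelianized Fox derivatives generating the augmentation ideal
`Δ` of `Z[Z^n]` as an ideal.  (Here `d` is the system of left Fox derivatives on `ZF`,
characterized by `a = ε(a)·1 + Σ_j d_j(a)(x_j - 1)`, and the abelianized Fox
derivatives of `u` are the images of the `d_j(u)` in `Z[Z^n]`; since abelianized Fox
derivatives depend only on the image of `u` in `M_n = F_n/F_n''`, quantifying over
`u ∈ F_n` is equivalent to quantifying over `M_n`.) -/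
theorem stmt15 (n : ℕ) (hn : Odd n)
    (d : MonoidAlgebra ℤ (FreeGroup (Fin n)) → Fin n →
      MonoidAlgebra ℤ (FreeGroup (Fin n)))
    (hd : ∀ a : MonoidAlgebra ℤ (FreeGroup (Fin n)),
      a = algebraMap ℤ (MonoidAlgebra ℤ (FreeGroup (Fin n))) (aug n a) +
        ∑ j : Fin n, d a j *
          (MonoidAlgebra.of ℤ (FreeGroup (Fin n)) (FreeGroup.of j) - 1)) :
    ¬ ∃ u : FreeGroup (Fin n),
      Ideal.span (Set.range fun i =>
          abelRing n (d (MonoidAlgebra.of ℤ (FreeGroup (Fin n)) u) i)) =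
        RingHom.ker (augA n).toRingHom := by
  rintro ⟨u, hspan⟩
  set D := fun i => abelRing n (d (MonoidAlgebra.of ℤ (FreeGroup (Fin n)) u) i)
  have hD := augmentation_eq_zero_of_span_eq_ker hspan
  have hfox : MonoidAlgebra.of ℤ _ (abel n u) = 1 + ∑ j, D j * (laurentVar j - 1) := by
    have := congrArg (abelRing n) (hd (MonoidAlgebra.of ℤ _ u))
    simp only [aug_of, map_one, map_add, map_sum, map_mul, map_sub, abelRing_of_of] at this
    rwa [abelRing_of] at this
  have hsyz : ∑ j, D j * (laurentVar j - 1) = 0 := by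
    rw [eq_one_of_of_eq_one_add_sum hD hfox, map_one] at hfox
    exact left_eq_add.mp hfox
  exact span_ne_ker_augmentation_of_sum_eq_zero hn hsyz hspan
end
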